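/- arXiv:1705.01350 — 9 statements merged into one kernel-verified Lean document; each statement's English description precedes it below -/
import Mathlib

section
/- Let F, G be m×m real matrices and suppose there exist invertible m×m matrices P, Q, a p×p matrix J, and a q×q nilpotent matrix H with p + q = m and H^{q*} = 0, such that P·F·Q is the block-diagonal matrix with blocks I_p and H, and P·G·Q is the block-diagonal matrix with blocks J and I_q. Write Q = [Q_p Q_q] (first p columns, last q columns) and P = [P_1; P_2] (first p rows, last q rows). Then for every input sequence V : ℕ → ℝ^m and every constant vector c ∈ ℝ^p, the sequence Y_k = Q_p·J^k·c + Q·D_k, where D_k ∈ ℝ^m has upper block ∑_{i=0}^{k−1} J^{k−i−1} P_1 V_i ∈ ℝ^p and lower block −∑_{i=0}^{q*−1} H^i P_2 V_{k+i} ∈ ℝ^q, satisfies F·Y_{k+1} = G·Y_k + V_k for all k ∈ ℕ. -/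
/-!
In the coordinates `w = Q⁻¹ Y` the pencil decouples: multiplying `F Y_{k+1} = G Y_k + V_k` by
the invertible `P` gives the slow system `x_{k+1} = J x_k + P₁ V_k` and the fast system
`H z_{k+1} = z_k + P₂ V_k`. The first is solved forwards by variation of constants; the second is
solved backwards by the finite Neumann series `z_k = -∑_{i < q*} H^i P₂ V_{k+i}`, which telescopes
because `H^{q*} = 0`.
-/

open Matrix Finset

namespace Matrix

variable {n R : Type*} [Fintype n] [DecidableEq n]

section Semiring

variable [Semiring R]

def forwardSolution (J : Matrix n n R) (c : n → R) (u : ℕ → n → R) (k : ℕ) : n → R :=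
  J ^ k *ᵥ c + ∑ i ∈ range k, J ^ (k - i - 1) *ᵥ u i

theorem forwardSolution_succ (J : Matrix n n R) (c : n → R) (u : ℕ → n → R) (k : ℕ) :
    J.forwardSolution c u (k + 1) = J *ᵥ J.forwardSolution c u k + u k := by
  have hsum : ∑ i ∈ range k, J ^ (k + 1 - i - 1) *ᵥ u i
      = J *ᵥ ∑ i ∈ range k, J ^ (k - i - 1) *ᵥ u i := by
    rw [mulVec_sum]
    refine sum_congr rfl fun i hi => ?_
    rw [mulVec_mulVec, ← pow_succ', show k + 1 - i - 1 = k - i - 1 + 1 by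
      have := mem_range.mp hi; omega]
  simp only [forwardSolution, sum_range_succ, hsum, add_tsub_cancel_left, tsub_self, pow_zero,
    one_mulVec, mulVec_add, mulVec_mulVec, ← pow_succ']
  abel

end Semiring

section Ring

variable [Ring R]

def backwardSolution (H : Matrix n n R) (s : ℕ) (u : ℕ → n → R) (k : ℕ) : n → R :=
  -∑ i ∈ range s, H ^ i *ᵥ u (k + i)

theorem backwardSolution_succ {H : Matrix n n R} {s : ℕ} (hH : H ^ s = 0) (u : ℕ → n → R)
    (k : ℕ) : H *ᵥ H.backwardSolution s u (k + 1) = H.backwardSolution s u k + u k := by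
  -- Both sides are read off from the sum over `range (s + 1)`, whose last term vanishes.
  have hshift : H *ᵥ ∑ i ∈ range s, H ^ i *ᵥ u (k + 1 + i)
      = ∑ i ∈ range s, H ^ (i + 1) *ᵥ u (k + (i + 1)) := by
    rw [mulVec_sum]
    refine sum_congr rfl fun i _ => ?_
    rw [mulVec_mulVec, ← pow_succ', add_assoc, add_comm 1 i]
  have hsucc := sum_range_succ' (fun i => H ^ i *ᵥ u (k + i)) s
  rw [sum_range_succ, hH, zero_mulVec, add_zero] at hsucc
  simp only [backwardSolution, mulVec_neg, hshift, hsucc, pow_zero, one_mulVec, add_zero]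
  abel

end Ring

theorem mulVec_mulVec_sumElim_eq_of_mul_mul_eq_fromBlocks {m : Type*} [Fintype m]
    [DecidableEq m] [CommRing R] {F G P Q : Matrix (m ⊕ n) (m ⊕ n) R} (hP : IsUnit P.det)
    {A C : Matrix m m R} {B D : Matrix n n R}
    (hPFQ : P * F * Q = fromBlocks A 0 0 B) (hPGQ : P * G * Q = fromBlocks C 0 0 D)
    {x x' : m → R} {z z' : n → R} {v : m ⊕ n → R}
    (hx : A *ᵥ x' = C *ᵥ x + P.toRows₁ *ᵥ v) (hz : B *ᵥ z' = D *ᵥ z + P.toRows₂ *ᵥ v) :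
    F *ᵥ (Q *ᵥ Sum.elim x' z') = G *ᵥ (Q *ᵥ Sum.elim x z) + v := by
  apply mulVec_injective_of_isUnit ((isUnit_iff_isUnit_det P).mpr hP)
  have hPv : P *ᵥ v = Sum.elim (P.toRows₁ *ᵥ v) (P.toRows₂ *ᵥ v) := by
    rw [← fromRows_mulVec, fromRows_toRows]
  rw [mulVec_add, mulVec_mulVec, mulVec_mulVec, mulVec_mulVec, mulVec_mulVec,
    hPFQ, hPGQ, fromBlocks_mulVec, fromBlocks_mulVec, hPv]
  simp only [Sum.elim_comp_inl, Sum.elim_comp_inr, zero_mulVec, add_zero, zero_add, hx, hz]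
  ext (i | i) <;> rfl

end Matrix

theorem weierstrass_form_solution_general
    (p q qs : ℕ)
    (F G P Q : Matrix (Fin p ⊕ Fin q) (Fin p ⊕ Fin q) ℝ)
    (hP : IsUnit P.det)
    (J : Matrix (Fin p) (Fin p) ℝ) (H : Matrix (Fin q) (Fin q) ℝ)
    (hH : H ^ qs = 0)
    (hPFQ : P * F * Q = Matrix.fromBlocks 1 0 0 H)
    (hPGQ : P * G * Q = Matrix.fromBlocks J 0 0 1)
    (Qp : Matrix (Fin p ⊕ Fin q) (Fin p) ℝ) (hQp : Qp = Q.submatrix id Sum.inl)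
    (P1 : Matrix (Fin p) (Fin p ⊕ Fin q) ℝ) (hP1 : P1 = P.submatrix Sum.inl id)
    (P2 : Matrix (Fin q) (Fin p ⊕ Fin q) ℝ) (hP2 : P2 = P.submatrix Sum.inr id)
    (V : ℕ → (Fin p ⊕ Fin q) → ℝ) (c : Fin p → ℝ)
    (D : ℕ → (Fin p ⊕ Fin q) → ℝ)
    (hD : ∀ k, D k = Sum.elim
      (∑ i ∈ Finset.range k, (J ^ (k - i - 1) * P1).mulVec (V i))
      (-(∑ i ∈ Finset.range qs, (H ^ i * P2).mulVec (V (k + i)))))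
    (Y : ℕ → (Fin p ⊕ Fin q) → ℝ)
    (hY : ∀ k, Y k = Qp.mulVec ((J ^ k).mulVec c) + Q.mulVec (D k)) :
    ∀ k : ℕ, F.mulVec (Y (k + 1)) = G.mulVec (Y k) + V k := by
  have hY' : ∀ k, Y k = Q *ᵥ Sum.elim (J.forwardSolution c (fun i => P1 *ᵥ V i) k)
      (H.backwardSolution qs (fun i => P2 *ᵥ V i) k) := by
    intro k
    rw [hY, hD, ← fromCols_toCols Q, fromCols_mulVec_sumElim, fromCols_mulVec_sumElim, hQp,
      show Q.submatrix id Sum.inl = Q.toCols₁ from rfl]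
    simp only [forwardSolution, backwardSolution, mulVec_add, ← mulVec_mulVec]
    abel
  intro k
  rw [hY', hY']
  refine mulVec_mulVec_sumElim_eq_of_mul_mul_eq_fromBlocks hP hPFQ hPGQ ?_ ?_
  · rw [one_mulVec, forwardSolution_succ, hP1]
    rfl
  · rw [one_mulVec, backwardSolution_succ hH, hP2]
    rfl

theorem weierstrass_form_solution
    (p q qs : ℕ)
    (F G P Q : Matrix (Fin p ⊕ Fin q) (Fin p ⊕ Fin q) ℝ)
    (hP : IsUnit P.det) (hQ : IsUnit Q.det)
    (J : Matrix (Fin p) (Fin p) ℝ) (H : Matrix (Fin q) (Fin q) ℝ)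
    (hH : H ^ qs = 0)
    (hPFQ : P * F * Q = Matrix.fromBlocks 1 0 0 H)
    (hPGQ : P * G * Q = Matrix.fromBlocks J 0 0 1)
    (Qp : Matrix (Fin p ⊕ Fin q) (Fin p) ℝ) (hQp : Qp = Q.submatrix id Sum.inl)
    (P1 : Matrix (Fin p) (Fin p ⊕ Fin q) ℝ) (hP1 : P1 = P.submatrix Sum.inl id)
    (P2 : Matrix (Fin q) (Fin p ⊕ Fin q) ℝ) (hP2 : P2 = P.submatrix Sum.inr id)
    (V : ℕ → (Fin p ⊕ Fin q) → ℝ) (c : Fin p → ℝ)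
    (D : ℕ → (Fin p ⊕ Fin q) → ℝ)
    (hD : ∀ k, D k = Sum.elim
      (∑ i ∈ Finset.range k, (J ^ (k - i - 1) * P1).mulVec (V i))
      (-(∑ i ∈ Finset.range qs, (H ^ i * P2).mulVec (V (k + i)))))
    (Y : ℕ → (Fin p ⊕ Fin q) → ℝ)
    (hY : ∀ k, Y k = Qp.mulVec ((J ^ k).mulVec c) + Q.mulVec (D k)) :
    ∀ k : ℕ, F.mulVec (Y (k + 1)) = G.mulVec (Y k) + V k :=
  weierstrass_form_solution_general p q qs F G P Q hP J H hH hPFQ hPGQ Qp hQp P1 hP1 P2 hP2 V c D hD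
    Y hY
end

section
/- Let F, G be m×m real matrices with invertible P, Q such that P·F·Q = diag(I_p, H) and P·G·Q = diag(J, I_q), where H is nilpotent with H^{q*} = 0, and write Q = [Q_p Q_q], P = [P_1; P_2]. Fix an input sequence V : ℕ → ℝ^m and define D_k ∈ ℝ^m with upper block ∑_{i=0}^{k−1} J^{k−i−1} P_1 V_i and lower block −∑_{i=0}^{q*−1} H^i P_2 V_{k+i}. Then for a given vector Y⁰ ∈ ℝ^m there exists a sequence Y : ℕ → ℝ^m with Y_0 = Y⁰ satisfying F·Y_{k+1} = G·Y_k + V_k for all k ∈ ℕ if and only if Y⁰ − Q·D_0 lies in the column span of Q_p, i.e. Y⁰ = Q_p·z + Q·D_0 for some z ∈ ℝ^p. -/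
open Matrix Finset

private lemma mulVec_finset_sum {m n : Type*} [Fintype n] (A : Matrix m n ℝ)
    (s : Finset ℕ) (f : ℕ → n → ℝ) :
    A *ᵥ (∑ i ∈ s, f i) = ∑ i ∈ s, A *ᵥ f i :=
  map_sum A.mulVecLin f s

private lemma mulVec_elim_zero {p q : ℕ} (Q : Matrix (Fin p ⊕ Fin q) (Fin p ⊕ Fin q) ℝ)
    (z : Fin p → ℝ) :
    Q *ᵥ Sum.elim z (0 : Fin q → ℝ) = (Q.submatrix id Sum.inl) *ᵥ z := by
  ext i
  simp [Matrix.mulVec, dotProduct, Fintype.sum_sum_type]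

theorem weierstrass_consistent_initial_condition
    (p q qs : ℕ)
    (F G P Q : Matrix (Fin p ⊕ Fin q) (Fin p ⊕ Fin q) ℝ)
    (hP : IsUnit P.det) (hQ : IsUnit Q.det)
    (J : Matrix (Fin p) (Fin p) ℝ) (H : Matrix (Fin q) (Fin q) ℝ)
    (hH : H ^ qs = 0)
    (hPFQ : P * F * Q = Matrix.fromBlocks 1 0 0 H)
    (hPGQ : P * G * Q = Matrix.fromBlocks J 0 0 1)
    (Qp : Matrix (Fin p ⊕ Fin q) (Fin p) ℝ) (hQp : Qp = Q.submatrix id Sum.inl)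
    (P1 : Matrix (Fin p) (Fin p ⊕ Fin q) ℝ) (hP1 : P1 = P.submatrix Sum.inl id)
    (P2 : Matrix (Fin q) (Fin p ⊕ Fin q) ℝ) (hP2 : P2 = P.submatrix Sum.inr id)
    (V : ℕ → (Fin p ⊕ Fin q) → ℝ)
    (D : ℕ → (Fin p ⊕ Fin q) → ℝ)
    (hD : ∀ k, D k = Sum.elim
      (∑ i ∈ Finset.range k, (J ^ (k - i - 1) * P1).mulVec (V i))
      (-(∑ i ∈ Finset.range qs, (H ^ i * P2).mulVec (V (k + i)))))
    (Y0 : (Fin p ⊕ Fin q) → ℝ) :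
    (∃ Y : ℕ → (Fin p ⊕ Fin q) → ℝ, Y 0 = Y0 ∧
      ∀ k : ℕ, F.mulVec (Y (k + 1)) = G.mulVec (Y k) + V k) ↔
    (∃ z : Fin p → ℝ, Y0 = Qp.mulVec z + Q.mulVec (D 0)) := by
  have hPV1' : ∀ k i, (P *ᵥ V k) (Sum.inl i) = (P1 *ᵥ V k) i := by
    intro k i; rw [hP1]; rfl
  have hPV2' : ∀ k i, (P *ᵥ V k) (Sum.inr i) = (P2 *ᵥ V k) i := by
    intro k i; rw [hP2]; rfl
  have hD0 : D 0 = Sum.elim (0 : Fin p → ℝ)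
      (-(∑ i ∈ Finset.range qs, (H ^ i * P2) *ᵥ (V i))) := by
    rw [hD 0]; simp
  constructor
  · rintro ⟨Y, hY0, hrec⟩
    set W : ℕ → (Fin p ⊕ Fin q) → ℝ := fun k => Q⁻¹ *ᵥ (Y k) with hW
    have hQW : ∀ k, Q *ᵥ W k = Y k := by
      intro k
      simp [hW, Matrix.mulVec_mulVec, Matrix.mul_nonsing_inv _ hQ]
    have hblock : ∀ k, (Matrix.fromBlocks (1 : Matrix (Fin p) (Fin p) ℝ) 0 0 H) *ᵥ W (k+1)
        = (Matrix.fromBlocks J 0 0 (1 : Matrix (Fin q) (Fin q) ℝ)) *ᵥ W k + P *ᵥ V k := by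
      intro k
      rw [← hPFQ, ← hPGQ]
      simp only [← Matrix.mulVec_mulVec, hQW, hrec k, Matrix.mulVec_add]
    have hlower : ∀ k, H *ᵥ (W (k+1) ∘ Sum.inr) = W k ∘ Sum.inr + P2 *ᵥ V k := by
      intro k
      have h := hblock k
      rw [Matrix.fromBlocks_mulVec, Matrix.fromBlocks_mulVec] at h
      funext i
      have h2 := congrFun h (Sum.inr i)
      simp only [Sum.elim_inr, Pi.add_apply, Matrix.zero_mulVec, Matrix.one_mulVec,
        Pi.zero_apply, zero_add] at h2
      simp only [Pi.add_apply]
      rw [h2, hPV2' k i]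
    have hiter : ∀ n k, W k ∘ Sum.inr =
        (H ^ n) *ᵥ (W (k + n) ∘ Sum.inr) - ∑ i ∈ Finset.range n, (H ^ i * P2) *ᵥ (V (k + i)) := by
      intro n
      induction n with
      | zero => intro k; simp [Matrix.one_mulVec]
      | succ n ih =>
        intro k
        have hl := hlower (k + n)
        rw [ih k, Finset.sum_range_succ]
        have key : (H ^ (n+1)) *ᵥ (W (k + (n+1)) ∘ Sum.inr)
            = (H ^ n) *ᵥ (W (k + n) ∘ Sum.inr) + (H ^ n * P2) *ᵥ V (k + n) := by
          have hw : W (k + n) ∘ Sum.inr = H *ᵥ (W (k + n + 1) ∘ Sum.inr) - P2 *ᵥ V (k + n) := by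
            rw [hl]; abel
          rw [pow_succ, ← Matrix.mulVec_mulVec, show k + (n+1) = k + n + 1 from rfl,
            ← Matrix.mulVec_mulVec, hw, Matrix.mulVec_sub, Matrix.mulVec_mulVec]
          abel
        rw [key]; abel
    have hforced : ∀ k, W k ∘ Sum.inr
        = -(∑ i ∈ Finset.range qs, (H ^ i * P2) *ᵥ (V (k + i))) := by
      intro k
      have h := hiter qs k
      rwa [hH, Matrix.zero_mulVec, zero_sub] at h
    refine ⟨W 0 ∘ Sum.inl, ?_⟩
    have hWsplit : W 0 = Sum.elim (W 0 ∘ Sum.inl) (0 : Fin q → ℝ) + D 0 := by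
      rw [hD0]
      funext i
      cases i with
      | inl i => simp
      | inr i =>
        have h := congrFun (hforced 0) i
        simpa using h
    have : Q *ᵥ W 0 = Qp *ᵥ (W 0 ∘ Sum.inl) + Q *ᵥ D 0 := by
      conv_lhs => rw [hWsplit]
      rw [Matrix.mulVec_add, mulVec_elim_zero, hQp]
    rw [← hY0, ← hQW 0, this]
  · rintro ⟨z, hz⟩
    set Wp : ℕ → Fin p → ℝ := fun k =>
      (J ^ k) *ᵥ z + ∑ i ∈ Finset.range k, (J ^ (k - i - 1) * P1) *ᵥ (V i) with hWp
    set Wq : ℕ → Fin q → ℝ := fun k =>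
      -(∑ i ∈ Finset.range qs, (H ^ i * P2) *ᵥ (V (k + i))) with hWq
    refine ⟨fun k => Q *ᵥ Sum.elim (Wp k) (Wq k), ?_, ?_⟩
    · show Q *ᵥ Sum.elim (Wp 0) (Wq 0) = Y0
      have hWp0 : Wp 0 = z := by simp [hWp, Matrix.one_mulVec]
      have hsplit : Sum.elim (Wp 0) (Wq 0) = Sum.elim z (0 : Fin q → ℝ) + D 0 := by
        rw [hWp0, hD0]
        funext i
        cases i <;> simp [hWq]
      rw [hsplit, Matrix.mulVec_add, mulVec_elim_zero, ← hQp, hz]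
    · intro k
      have hPunit : IsUnit P := (Matrix.isUnit_iff_isUnit_det P).2 hP
      have hPinj : Function.Injective (P.mulVec) := Matrix.mulVec_injective_iff_isUnit.2 hPunit
      show F *ᵥ (Q *ᵥ Sum.elim (Wp (k+1)) (Wq (k+1))) = G *ᵥ (Q *ᵥ Sum.elim (Wp k) (Wq k)) + V k
      apply hPinj
      have hup : Wp (k+1) = J *ᵥ Wp k + P1 *ᵥ V k := by
        simp only [hWp]
        rw [Finset.sum_range_succ, Matrix.mulVec_add, Matrix.mulVec_mulVec, ← pow_succ',
          mulVec_finset_sum]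
        have hterm : ∀ i ∈ Finset.range k,
            J *ᵥ ((J ^ (k - i - 1) * P1) *ᵥ V i) = (J ^ (k + 1 - i - 1) * P1) *ᵥ V i := by
          intro i hi
          rw [Finset.mem_range] at hi
          have hexp : k + 1 - i - 1 = (k - i - 1) + 1 := by omega
          rw [Matrix.mulVec_mulVec, ← Matrix.mul_assoc, hexp, pow_succ']
        rw [Finset.sum_congr rfl hterm]
        have h0 : k + 1 - k - 1 = 0 := by omega
        rw [h0, pow_zero, Matrix.one_mul]
        abel
      have hlow : H *ᵥ Wq (k+1) = Wq k + P2 *ᵥ V k := by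
        simp only [hWq]
        rcases Nat.eq_zero_or_pos qs with hqs | hqs
        · subst hqs
          have h10 : (1 : Matrix (Fin q) (Fin q) ℝ) = 0 := by rw [← pow_zero H, hH]
          have hall : ∀ v : Fin q → ℝ, v = 0 := by
            intro v
            calc v = (1 : Matrix (Fin q) (Fin q) ℝ) *ᵥ v := (Matrix.one_mulVec v).symm
              _ = 0 := by rw [h10, Matrix.zero_mulVec]
          rw [hall (H *ᵥ _), hall (_ + _)]
        · obtain ⟨m, rfl⟩ := Nat.exists_eq_succ_of_ne_zero hqs.ne'
          rw [Matrix.mulVec_neg, mulVec_finset_sum]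
          have h1 : ∀ i ∈ Finset.range (m+1),
              H *ᵥ ((H ^ i * P2) *ᵥ V (k + 1 + i)) = (H ^ (i+1) * P2) *ᵥ V (k + 1 + i) := by
            intro i _
            rw [Matrix.mulVec_mulVec, ← Matrix.mul_assoc, ← pow_succ']
          rw [Finset.sum_congr rfl h1, Finset.sum_range_succ, hH, Matrix.zero_mul,
            Matrix.zero_mulVec, add_zero]
          rw [Finset.sum_range_succ' (fun i => (H ^ i * P2) *ᵥ V (k + i)) m]
          simp only [pow_zero, Matrix.one_mul, add_zero]
          have h2 : ∀ i, k + 1 + i = k + (i + 1) := fun i => by omega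
          simp only [h2]
          abel
      calc P *ᵥ (F *ᵥ (Q *ᵥ Sum.elim (Wp (k+1)) (Wq (k+1))))
          = (P * F * Q) *ᵥ Sum.elim (Wp (k+1)) (Wq (k+1)) := by
            rw [Matrix.mulVec_mulVec, Matrix.mulVec_mulVec]
        _ = Sum.elim (Wp (k+1)) (H *ᵥ Wq (k+1)) := by
            rw [hPFQ, Matrix.fromBlocks_mulVec]
            simp [Matrix.one_mulVec, Matrix.zero_mulVec]
        _ = Sum.elim (J *ᵥ Wp k + P1 *ᵥ V k) (Wq k + P2 *ᵥ V k) := by rw [hup, hlow]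
        _ = (P * G * Q) *ᵥ Sum.elim (Wp k) (Wq k) + P *ᵥ V k := by
            rw [hPGQ, Matrix.fromBlocks_mulVec]
            funext i
            cases i with
            | inl i =>
              simp only [Sum.elim_inl, Pi.add_apply, Sum.elim_comp_inl, Sum.elim_comp_inr,
                Matrix.zero_mulVec, Pi.zero_apply, add_zero, Matrix.one_mulVec]
              rw [hPV1' k i]
            | inr i =>
              simp only [Sum.elim_inr, Pi.add_apply, Sum.elim_comp_inl, Sum.elim_comp_inr,
                Matrix.zero_mulVec, Pi.zero_apply, zero_add, Matrix.one_mulVec]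
              rw [hPV2' k i]
        _ = P *ᵥ (G *ᵥ (Q *ᵥ Sum.elim (Wp k) (Wq k)) + V k) := by
            rw [Matrix.mulVec_add, Matrix.mulVec_mulVec, Matrix.mulVec_mulVec]
end

section
/- Let F, G be m×m real matrices with invertible P, Q such that P·F·Q = diag(I_p, H) and P·G·Q = diag(J, I_q), where H is nilpotent with H^{q*} = 0, and write Q = [Q_p Q_q], P = [P_1; P_2]. Fix V : ℕ → ℝ^m and define D_k as the vector with upper block ∑_{i=0}^{k−1} J^{k−i−1} P_1 V_i and lower block −∑_{i=0}^{q*−1} H^i P_2 V_{k+i}. If Y⁰ = Q_p·z + Q·D_0 for some z ∈ ℝ^p (the initial condition is consistent), then there is exactly one sequence Y : ℕ → ℝ^m with Y_0 = Y⁰ and F·Y_{k+1} = G·Y_k + V_k for all k ∈ ℕ, namely Y_k = Q_p·J^k·z + Q·D_k; moreover the vector z with Y⁰ = Q_p·z + Q·D_0 is unique. -/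
/-!
Writing `Y = Q (x, y)` and multiplying the equation by `P` decouples it into the slow subsystem
`x_{k+1} = J x_k + P₁ V_k` and the fast subsystem `H y_{k+1} = y_k + P₂ V_k`. The slow one is an
ordinary forward recurrence, solved by variation of constants from `x_0 = z`. The fast one has no
free initial value: unrolling it `q*` steps gives `y_k = H^{q*} y_{k+q*} - ∑_{i<q*} H^i P₂ V_{k+i}`,
and `H^{q*} = 0` forces `y_k` to be the lower block of `D_k`. Invertibility of `Q` then transfers
existence and uniqueness back to `Y`, and also makes `z ↦ Q_p z` injective.
-/

open Matrix Finset

section Recurrences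

variable {R m n : Type*} [Fintype m] [Fintype n] [DecidableEq n]

def slowResponse [Semiring R] (J : Matrix n n R) (B : Matrix n m R) (V : ℕ → m → R) (k : ℕ) :
    n → R :=
  ∑ i ∈ range k, (J ^ (k - i - 1) * B) *ᵥ V i

def fastResponse [Ring R] (H : Matrix n n R) (B : Matrix n m R) (V : ℕ → m → R) (qs k : ℕ) :
    n → R :=
  -∑ i ∈ range qs, (H ^ i * B) *ᵥ V (k + i)

section Semiring

variable [Semiring R] (J : Matrix n n R) (B : Matrix n m R) (V : ℕ → m → R)

@[simp]
lemma slowResponse_zero : slowResponse J B V 0 = 0 := by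
  simp [slowResponse]

lemma slowResponse_succ (k : ℕ) :
    slowResponse J B V (k + 1) = J *ᵥ slowResponse J B V k + B *ᵥ V k := by
  have hpow : ∀ i ∈ range k,
      (J ^ (k + 1 - i - 1) * B) *ᵥ V i = J *ᵥ ((J ^ (k - i - 1) * B) *ᵥ V i) := fun i hi => by
    rw [mulVec_mulVec, ← Matrix.mul_assoc, ← pow_succ', show k + 1 - i - 1 = k - i - 1 + 1 by
      have := mem_range.1 hi; omega]
  rw [slowResponse, slowResponse, sum_range_succ, sum_congr rfl hpow, mulVec_sum,
    show k + 1 - k - 1 = 0 by omega, pow_zero, Matrix.one_mul]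

lemma eq_pow_mulVec_add_slowResponse {x : ℕ → n → R}
    (hx : ∀ k, x (k + 1) = J *ᵥ x k + B *ᵥ V k) (k : ℕ) :
    x k = J ^ k *ᵥ x 0 + slowResponse J B V k := by
  induction k with
  | zero => simp
  | succ k ih =>
    rw [hx, ih, slowResponse_succ, mulVec_add, mulVec_mulVec, ← pow_succ', add_assoc]

end Semiring

section Ring

variable [Ring R] {H : Matrix n n R} {qs : ℕ} (B : Matrix n m R) (V : ℕ → m → R)

lemma mulVec_fastResponse_succ (hH : H ^ qs = 0) (k : ℕ) :
    H *ᵥ fastResponse H B V qs (k + 1) = fastResponse H B V qs k + B *ᵥ V k := by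
  have hshift : ∑ i ∈ range qs, H *ᵥ ((H ^ i * B) *ᵥ V (k + 1 + i)) =
      ∑ i ∈ range qs, (H ^ (i + 1) * B) *ᵥ V (k + (i + 1)) := by
    refine sum_congr rfl fun i _ => ?_
    rw [mulVec_mulVec, ← Matrix.mul_assoc, ← pow_succ', Nat.add_right_comm, add_assoc]
  have htelescope := sum_range_succ' (fun i => (H ^ i * B) *ᵥ V (k + i)) qs
  rw [sum_range_succ, hH] at htelescope
  simp only [fastResponse, mulVec_neg, mulVec_sum, hshift]
  simp only [Matrix.zero_mul, zero_mulVec, add_zero, pow_zero, Matrix.one_mul] at htelescope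
  rw [eq_sub_of_add_eq htelescope.symm]
  abel

lemma eq_pow_mulVec_sub_sum {y : ℕ → n → R} (hy : ∀ k, H *ᵥ y (k + 1) = y k + B *ᵥ V k)
    (N k : ℕ) : y k = H ^ N *ᵥ y (k + N) - ∑ i ∈ range N, (H ^ i * B) *ᵥ V (k + i) := by
  induction N with
  | zero => simp
  | succ N ih =>
    rw [ih, sum_range_succ, pow_succ, ← mulVec_mulVec, ← add_assoc, hy, mulVec_add,
      ← mulVec_mulVec]
    abel

lemma eq_fastResponse (hH : H ^ qs = 0) {y : ℕ → n → R}
    (hy : ∀ k, H *ᵥ y (k + 1) = y k + B *ᵥ V k) (k : ℕ) : y k = fastResponse H B V qs k := by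
  rw [eq_pow_mulVec_sub_sum B V hy qs k, hH, zero_mulVec, zero_sub, fastResponse]

end Ring

end Recurrences

section Blocks

variable {R l m n : Type*}

lemma mulVec_eq_elim_submatrix [Fintype l] [Semiring R] (P : Matrix (m ⊕ n) l R) (v : l → R) :
    P *ᵥ v = Sum.elim (P.submatrix Sum.inl id *ᵥ v) (P.submatrix Sum.inr id *ᵥ v) := by
  funext i
  cases i <;> rfl

lemma submatrix_inl_mulVec [Fintype m] [Fintype n] [Semiring R] (Q : Matrix l (m ⊕ n) R)
    (u : m → R) :
    Q.submatrix id Sum.inl *ᵥ u = Q *ᵥ Sum.elim u 0 := by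
  funext i
  simp [mulVec, dotProduct, Fintype.sum_sum_type]

variable [Fintype m] [Fintype n] [DecidableEq m] [DecidableEq n] [CommRing R]

lemma submatrix_inl_mulVec_injective {Q : Matrix (m ⊕ n) (m ⊕ n) R} (hQ : IsUnit Q.det) :
    Function.Injective (Q.submatrix id Sum.inl *ᵥ ·) := fun u u' h => by
  simp only [submatrix_inl_mulVec] at h
  exact (Sum.elim_eq_iff.1 (mulVec_injective_of_isUnit ((isUnit_iff_isUnit_det Q).2 hQ) h)).1

variable {F G P Q : Matrix (m ⊕ n) (m ⊕ n) R} {J : Matrix m m R} {H : Matrix n n R}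

lemma weierstrass_step_iff (hP : IsUnit P.det) (hPFQ : P * F * Q = fromBlocks 1 0 0 H)
    (hPGQ : P * G * Q = fromBlocks J 0 0 1) (x x' : m → R) (y y' : n → R) (v : m ⊕ n → R) :
    F *ᵥ (Q *ᵥ Sum.elim x' y') = G *ᵥ (Q *ᵥ Sum.elim x y) + v ↔
      x' = J *ᵥ x + P.submatrix Sum.inl id *ᵥ v ∧ H *ᵥ y' = y + P.submatrix Sum.inr id *ᵥ v := by
  rw [← (mulVec_injective_of_isUnit ((isUnit_iff_isUnit_det P).2 hP)).eq_iff, mulVec_add,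
    mulVec_mulVec, mulVec_mulVec, mulVec_mulVec, mulVec_mulVec, hPFQ, hPGQ, fromBlocks_mulVec,
    fromBlocks_mulVec, mulVec_eq_elim_submatrix P v]
  simp only [one_mulVec, zero_mulVec, add_zero, zero_add, ← Sum.elim_add_add, Sum.elim_eq_iff,
    Sum.elim_comp_inl, Sum.elim_comp_inr]

lemma weierstrass_solution_iff (hP : IsUnit P.det) (hPFQ : P * F * Q = fromBlocks 1 0 0 H)
    (hPGQ : P * G * Q = fromBlocks J 0 0 1) (x : ℕ → m → R) (y : ℕ → n → R)
    (V : ℕ → m ⊕ n → R) :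
    (∀ k, F *ᵥ (Q *ᵥ Sum.elim (x (k + 1)) (y (k + 1))) = G *ᵥ (Q *ᵥ Sum.elim (x k) (y k)) + V k) ↔
      (∀ k, x (k + 1) = J *ᵥ x k + P.submatrix Sum.inl id *ᵥ V k) ∧
        ∀ k, H *ᵥ y (k + 1) = y k + P.submatrix Sum.inr id *ᵥ V k := by
  simp only [weierstrass_step_iff hP hPFQ hPGQ, forall_and]

lemma weierstrass_solution_eq (hP : IsUnit P.det) (hQ : IsUnit Q.det) {qs : ℕ} (hH : H ^ qs = 0)
    (hPFQ : P * F * Q = fromBlocks 1 0 0 H) (hPGQ : P * G * Q = fromBlocks J 0 0 1)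
    {V : ℕ → m ⊕ n → R} {Y : ℕ → m ⊕ n → R} (hY : ∀ k, F *ᵥ Y (k + 1) = G *ᵥ Y k + V k)
    {x₀ : m → R} {y₀ : n → R} (hY0 : Y 0 = Q *ᵥ Sum.elim x₀ y₀) (k : ℕ) :
    Y k = Q *ᵥ Sum.elim (J ^ k *ᵥ x₀ + slowResponse J (P.submatrix Sum.inl id) V k)
      (fastResponse H (P.submatrix Sum.inr id) V qs k) := by
  set w := fun k => Q⁻¹ *ᵥ Y k
  have hYw : ∀ k, Y k = Q *ᵥ Sum.elim (w k ∘ Sum.inl) (w k ∘ Sum.inr) := fun k => by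
    rw [Sum.elim_comp_inl_inr, mulVec_mulVec, mul_nonsing_inv Q hQ, one_mulVec]
  obtain ⟨hslow, hfast⟩ := (weierstrass_solution_iff hP hPFQ hPGQ
      (fun k => w k ∘ Sum.inl) (fun k => w k ∘ Sum.inr) V).1 fun k => by
    simpa only [← hYw] using hY k
  have hx₀ : w 0 ∘ Sum.inl = x₀ :=
    (Sum.elim_eq_iff.1 (mulVec_injective_of_isUnit ((isUnit_iff_isUnit_det Q).2 hQ)
    ((hYw 0).symm.trans hY0))).1
  have hx := eq_pow_mulVec_add_slowResponse J _ V (x := fun k => w k ∘ Sum.inl) hslow k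
  have hy := eq_fastResponse _ V hH (y := fun k => w k ∘ Sum.inr) hfast k
  rw [hYw k, hx, hx₀, hy]

end Blocks

theorem weierstrass_unique_solution
    (p q qs : ℕ)
    (F G P Q : Matrix (Fin p ⊕ Fin q) (Fin p ⊕ Fin q) ℝ)
    (hP : IsUnit P.det) (hQ : IsUnit Q.det)
    (J : Matrix (Fin p) (Fin p) ℝ) (H : Matrix (Fin q) (Fin q) ℝ)
    (hH : H ^ qs = 0)
    (hPFQ : P * F * Q = Matrix.fromBlocks 1 0 0 H)
    (hPGQ : P * G * Q = Matrix.fromBlocks J 0 0 1)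
    (Qp : Matrix (Fin p ⊕ Fin q) (Fin p) ℝ) (hQp : Qp = Q.submatrix id Sum.inl)
    (P1 : Matrix (Fin p) (Fin p ⊕ Fin q) ℝ) (hP1 : P1 = P.submatrix Sum.inl id)
    (P2 : Matrix (Fin q) (Fin p ⊕ Fin q) ℝ) (hP2 : P2 = P.submatrix Sum.inr id)
    (V : ℕ → (Fin p ⊕ Fin q) → ℝ)
    (D : ℕ → (Fin p ⊕ Fin q) → ℝ)
    (hD : ∀ k, D k = Sum.elim
      (∑ i ∈ Finset.range k, (J ^ (k - i - 1) * P1).mulVec (V i))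
      (-(∑ i ∈ Finset.range qs, (H ^ i * P2).mulVec (V (k + i)))))
    (Y0 : (Fin p ⊕ Fin q) → ℝ) (z : Fin p → ℝ)
    (hz : Y0 = Qp.mulVec z + Q.mulVec (D 0)) :
    (∃! Y : ℕ → (Fin p ⊕ Fin q) → ℝ, Y 0 = Y0 ∧
        ∀ k : ℕ, F.mulVec (Y (k + 1)) = G.mulVec (Y k) + V k) ∧
    (∀ Y : ℕ → (Fin p ⊕ Fin q) → ℝ,
        (Y 0 = Y0 ∧ ∀ k : ℕ, F.mulVec (Y (k + 1)) = G.mulVec (Y k) + V k) →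
        ∀ k : ℕ, Y k = Qp.mulVec ((J ^ k).mulVec z) + Q.mulVec (D k)) ∧
    (∀ z' : Fin p → ℝ, Y0 = Qp.mulVec z' + Q.mulVec (D 0) → z' = z) := by
  subst hQp hP1 hP2
  have hform : ∀ k, Q.submatrix id Sum.inl *ᵥ (J ^ k *ᵥ z) + Q *ᵥ D k =
      Q *ᵥ Sum.elim (J ^ k *ᵥ z + slowResponse J (P.submatrix Sum.inl id) V k)
        (fastResponse H (P.submatrix Sum.inr id) V qs k) := fun k => by
    rw [submatrix_inl_mulVec, ← mulVec_add, hD, ← Sum.elim_add_add, zero_add]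
    rfl
  have hY0 : Y0 = Q *ᵥ Sum.elim z (fastResponse H (P.submatrix Sum.inr id) V qs 0) := by
    rw [hz, ← one_mulVec z, ← pow_zero J, hform, slowResponse_zero, add_zero, pow_zero,
      one_mulVec]
  have hunique : ∀ Y : ℕ → Fin p ⊕ Fin q → ℝ,
      (Y 0 = Y0 ∧ ∀ k, F *ᵥ Y (k + 1) = G *ᵥ Y k + V k) →
        ∀ k, Y k = Q.submatrix id Sum.inl *ᵥ (J ^ k *ᵥ z) + Q *ᵥ D k :=
    fun Y ⟨h0, hY⟩ k =>
      (weierstrass_solution_eq hP hQ hH hPFQ hPGQ hY (h0.trans hY0) k).trans (hform k).symm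
  refine ⟨⟨_, ⟨?_, fun k => ?_⟩, fun Y hY => funext (hunique Y hY)⟩, hunique,
    fun z' hz' => submatrix_inl_mulVec_injective hQ (add_right_cancel (hz'.symm.trans hz))⟩
  · simpa using hz.symm
  · simp only [hform]
    refine (weierstrass_solution_iff hP hPFQ hPGQ
      (fun k => J ^ k *ᵥ z + slowResponse J _ V k) (fastResponse H _ V qs) V).2
      ⟨fun k => ?_, ?_⟩ k
    · rw [slowResponse_succ, mulVec_add, mulVec_mulVec, ← pow_succ', add_assoc]
    · exact mulVec_fastResponse_succ _ V hH
end

section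
/- Let Ḡ ∈ ℝ be constant government expenditure and let s₁, s₂ ∈ ℝ satisfy s₁² = a(1+b)s₁ − ab and s₂² = a(1+b)s₂ − ab. Then for any constants c₁, c₂ ∈ ℝ, the sequences T_k = c₁·s₁^{k+1} + c₂·s₂^{k+1} + Ḡ/(1−a), C_k = a(c₁·s₁^k + c₂·s₂^k) + a·Ḡ/(1−a), I_k = c₁·s₁^k·(s₁ − a) + c₂·s₂^k·(s₂ − a) satisfy F·Y_{k+1} = G·Y_k + (Ḡ, 0, 0)ᵀ for all k ∈ ℕ, where Y_k = (T_k, C_k, I_k)ᵀ. -/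
/-!
The descriptor system `F y (k+1) = G y k + u` is linear, so a sum of solutions solves it with the
summed forcing. The constant vector `(Ḡ/(1-a), aḠ/(1-a), 0)` is a steady state for the forcing
`(Ḡ, 0, 0)`, and for a root `s` of `s² = a(1+b)s - ab` the vector `v = (s, a, s - a)` satisfies
`G v = s F v` (a generalized eigenvector of the pencil), so `k ↦ sᵏ v` solves the homogeneous
system. The given `Y` is a linear combination of these three solutions.
-/

open Matrix

def IsDescriptorSolution {n R : Type*} [Fintype n] [CommRing R] (F G : Matrix n n R)
    (u : n → R) (y : ℕ → n → R) : Prop :=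
  ∀ k, F *ᵥ y (k + 1) = G *ᵥ y k + u

namespace IsDescriptorSolution

variable {n R : Type*} [Fintype n] [CommRing R] {F G : Matrix n n R} {u w : n → R}
  {y z : ℕ → n → R}

theorem add (hy : IsDescriptorSolution F G u y) (hz : IsDescriptorSolution F G w z) :
    IsDescriptorSolution F G (u + w) (y + z) := fun k => by
  simp only [Pi.add_apply, mulVec_add, hy k, hz k]
  abel

theorem smul (c : R) (hy : IsDescriptorSolution F G u y) :
    IsDescriptorSolution F G (c • u) (c • y) := fun k => by
  simp only [Pi.smul_apply, mulVec_smul, hy k, smul_add]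

theorem const {v : n → R} (hv : F *ᵥ v = G *ᵥ v + u) :
    IsDescriptorSolution F G u fun _ => v := fun _ => hv

theorem geom {s : R} {v : n → R} (hv : s • F *ᵥ v = G *ᵥ v) :
    IsDescriptorSolution F G 0 fun k => s ^ k • v := fun k => by
  rw [mulVec_smul, mulVec_smul, ← hv, add_zero, smul_smul, pow_succ]

end IsDescriptorSolution

section Samuelson

variable (a b : ℝ)

theorem samuelson_mode_mulVec {s : ℝ} (hs : s ^ 2 = a * (1 + b) * s - a * b) :
    s • !![0, 0, 0; 0, 1, 0; 0, -b, 1] *ᵥ ![s, a, s - a]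
      = !![-1, 1, 1; a, 0, 0; 0, -b, 0] *ᵥ ![s, a, s - a] := by
  ext i
  fin_cases i <;> simp [mulVec, dotProduct, Fin.sum_univ_succ]
  · ring
  · linear_combination hs

theorem samuelson_steady_state_mulVec (ha1 : a ≠ 1) (Gbar : ℝ) :
    !![0, 0, 0; 0, 1, 0; 0, -b, 1] *ᵥ ![Gbar / (1 - a), a * Gbar / (1 - a), 0]
      = !![-1, 1, 1; a, 0, 0; 0, -b, 0] *ᵥ ![Gbar / (1 - a), a * Gbar / (1 - a), 0]
        + ![Gbar, 0, 0] := by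
  have h1a : 1 - a ≠ 0 := sub_ne_zero.mpr (Ne.symm ha1)
  ext i
  fin_cases i <;> simp [mulVec, dotProduct, Fin.sum_univ_succ]
  · field_simp
    ring
  · ring
  · ring

end Samuelson

theorem samuelson_general_solution_satisfies_system_general
    (a b : ℝ) (ha1 : a < 1)
    (F G : Matrix (Fin 3) (Fin 3) ℝ)
    (hF : F = !![0, 0, 0; 0, 1, 0; 0, -b, 1])
    (hG : G = !![-1, 1, 1; a, 0, 0; 0, -b, 0])
    (Gbar : ℝ) (s₁ s₂ : ℝ)
    (hs₁ : s₁ ^ 2 = a * (1 + b) * s₁ - a * b)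
    (hs₂ : s₂ ^ 2 = a * (1 + b) * s₂ - a * b)
    (c₁ c₂ : ℝ)
    (T C I : ℕ → ℝ)
    (hT : ∀ k, T k = c₁ * s₁ ^ (k + 1) + c₂ * s₂ ^ (k + 1) + Gbar / (1 - a))
    (hC : ∀ k, C k = a * (c₁ * s₁ ^ k + c₂ * s₂ ^ k) + a * Gbar / (1 - a))
    (hI : ∀ k, I k = c₁ * s₁ ^ k * (s₁ - a) + c₂ * s₂ ^ k * (s₂ - a))
    (Y : ℕ → Fin 3 → ℝ) (hY : ∀ k, Y k = ![T k, C k, I k]) :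
    ∀ k : ℕ, F.mulVec (Y (k + 1)) = G.mulVec (Y k) + ![Gbar, 0, 0] := by
  have hsol := (((IsDescriptorSolution.geom (samuelson_mode_mulVec a b hs₁)).smul c₁).add
    ((IsDescriptorSolution.geom (samuelson_mode_mulVec a b hs₂)).smul c₂)).add
    (IsDescriptorSolution.const (samuelson_steady_state_mulVec a b ha1.ne Gbar))
  have hY_eq : Y = c₁ • (fun k => s₁ ^ k • ![s₁, a, s₁ - a])
      + c₂ • (fun k => s₂ ^ k • ![s₂, a, s₂ - a])
      + fun _ => ![Gbar / (1 - a), a * Gbar / (1 - a), 0] := by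
    ext k i
    fin_cases i <;> simp [hY, hT, hC, hI] <;> ring
  rw [smul_zero, smul_zero, zero_add, zero_add] at hsol
  rw [hF, hG, hY_eq]
  exact hsol

theorem samuelson_general_solution_satisfies_system
    (a b : ℝ) (ha : 0 < a) (ha1 : a < 1) (hb : 0 < b)
    (F G : Matrix (Fin 3) (Fin 3) ℝ)
    (hF : F = !![0, 0, 0; 0, 1, 0; 0, -b, 1])
    (hG : G = !![-1, 1, 1; a, 0, 0; 0, -b, 0])
    (Gbar : ℝ) (s₁ s₂ : ℝ)
    (hs₁ : s₁ ^ 2 = a * (1 + b) * s₁ - a * b)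
    (hs₂ : s₂ ^ 2 = a * (1 + b) * s₂ - a * b)
    (c₁ c₂ : ℝ)
    (T C I : ℕ → ℝ)
    (hT : ∀ k, T k = c₁ * s₁ ^ (k + 1) + c₂ * s₂ ^ (k + 1) + Gbar / (1 - a))
    (hC : ∀ k, C k = a * (c₁ * s₁ ^ k + c₂ * s₂ ^ k) + a * Gbar / (1 - a))
    (hI : ∀ k, I k = c₁ * s₁ ^ k * (s₁ - a) + c₂ * s₂ ^ k * (s₂ - a))
    (Y : ℕ → Fin 3 → ℝ) (hY : ∀ k, Y k = ![T k, C k, I k]) :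
    ∀ k : ℕ, F.mulVec (Y (k + 1)) = G.mulVec (Y k) + ![Gbar, 0, 0] :=
  samuelson_general_solution_satisfies_system_general a b ha1 F G hF hG Gbar s₁ s₂ hs₁ hs₂ c₁ c₂ T C
    I hT hC hI Y hY
end

section
/- Assume a²(1+b)² > 4ab, and let s₁ ≠ s₂ be the two real roots of s² − a(1+b)s + ab. Let Ḡ ∈ ℝ and let Y : ℕ → ℝ³, Y_k = (T_k, C_k, I_k)ᵀ, be any sequence satisfying F·Y_{k+1} = G·Y_k + (Ḡ, 0, 0)ᵀ for all k ∈ ℕ. Then there exist unique constants c₁, c₂ ∈ ℝ such that for all k ∈ ℕ: T_k = c₁·s₁^{k+1} + c₂·s₂^{k+1} + Ḡ/(1−a), C_k = a(c₁·s₁^k + c₂·s₂^k) + a·Ḡ/(1−a), and I_k = c₁·s₁^k·(s₁ − a) + c₂·s₂^k·(s₂ − a). -/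
theorem samuelson_solution_representation_unique
    (a b : ℝ) (ha : 0 < a) (ha1 : a < 1) (hb : 0 < b)
    (F G : Matrix (Fin 3) (Fin 3) ℝ)
    (hF : F = !![0, 0, 0; 0, 1, 0; 0, -b, 1])
    (hG : G = !![-1, 1, 1; a, 0, 0; 0, -b, 0])
    (hdisc : a ^ 2 * (1 + b) ^ 2 > 4 * (a * b))
    (s₁ s₂ : ℝ) (hne : s₁ ≠ s₂)
    (hs₁ : s₁ ^ 2 - a * (1 + b) * s₁ + a * b = 0)
    (hs₂ : s₂ ^ 2 - a * (1 + b) * s₂ + a * b = 0)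
    (Gbar : ℝ)
    (T C I : ℕ → ℝ)
    (Y : ℕ → Fin 3 → ℝ) (hY : ∀ k, Y k = ![T k, C k, I k])
    (hsys : ∀ k : ℕ, F.mulVec (Y (k + 1)) = G.mulVec (Y k) + ![Gbar, 0, 0]) :
    ∃! c : ℝ × ℝ, ∀ k : ℕ,
      T k = c.1 * s₁ ^ (k + 1) + c.2 * s₂ ^ (k + 1) + Gbar / (1 - a) ∧
      C k = a * (c.1 * s₁ ^ k + c.2 * s₂ ^ k) + a * Gbar / (1 - a) ∧
      I k = c.1 * s₁ ^ k * (s₁ - a) + c.2 * s₂ ^ k * (s₂ - a) := by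
  subst hF hG
  have e0 : ∀ k, T k = C k + I k + Gbar := by
    intro k
    have h := congrFun (hsys k) 0
    simp [hY, Matrix.mulVec, dotProduct, Fin.sum_univ_three] at h
    linarith
  have e1 : ∀ k, C (k+1) = a * T k := by
    intro k
    have h := congrFun (hsys k) 1
    simp [hY, Matrix.mulVec, dotProduct, Fin.sum_univ_three] at h
    linarith
  have e2 : ∀ k, -b * C (k+1) + I (k+1) = -b * C k := by
    intro k
    have h := congrFun (hsys k) 2
    simp [hY, Matrix.mulVec, dotProduct, Fin.sum_univ_three] at h
    linarith
  have ha0 : (a:ℝ) ≠ 0 := ne_of_gt ha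
  have h1a : (1:ℝ) - a ≠ 0 := by intro h; linarith
  have hs12 : s₁ - s₂ ≠ 0 := sub_ne_zero.mpr hne
  have hr1 : s₁ * (s₁ - a) = a * b * (s₁ - 1) := by linear_combination hs₁
  have hr2 : s₂ * (s₂ - a) = a * b * (s₂ - 1) := by linear_combination hs₂
  have hGdiv : a * Gbar / (1 - a) = Gbar / (1 - a) - Gbar := by
    field_simp
    ring
  obtain ⟨c₁, c₂, hC0, hI0⟩ :
      ∃ c₁ c₂ : ℝ, C 0 = a * (c₁ + c₂) + a * Gbar / (1 - a) ∧
        I 0 = c₁ * (s₁ - a) + c₂ * (s₂ - a) := by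
    refine ⟨((I 0 + a * (C 0 / a - Gbar / (1 - a))) - s₂ * (C 0 / a - Gbar / (1 - a))) / (s₁ - s₂),
      (s₁ * (C 0 / a - Gbar / (1 - a)) - (I 0 + a * (C 0 / a - Gbar / (1 - a)))) / (s₁ - s₂),
      ?_, ?_⟩
    · field_simp
      ring
    · field_simp
      ring
  refine ⟨(c₁, c₂), ?_, ?_⟩
  · have key : ∀ k, C k = a * (c₁ * s₁ ^ k + c₂ * s₂ ^ k) + a * Gbar / (1 - a) ∧
        I k = c₁ * s₁ ^ k * (s₁ - a) + c₂ * s₂ ^ k * (s₂ - a) := by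
      intro k
      induction k with
      | zero =>
        constructor
        · linear_combination hC0
        · linear_combination hI0
      | succ n ih =>
        have hT : T n = c₁ * s₁ ^ (n + 1) + c₂ * s₂ ^ (n + 1) + Gbar / (1 - a) := by
          linear_combination e0 n + ih.1 + ih.2 + hGdiv
        constructor
        · linear_combination e1 n + a * hT
        · linear_combination e2 n + b * e1 n + a * b * hT - b * ih.1 -
            c₁ * s₁ ^ n * hr1 - c₂ * s₂ ^ n * hr2
    intro k
    exact ⟨by linear_combination e0 k + (key k).1 + (key k).2 + hGdiv, (key k).1, (key k).2⟩
  · rintro ⟨d₁, d₂⟩ hd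
    obtain ⟨-, hCd, hId⟩ := hd 0
    simp only [pow_zero, mul_one] at hCd hId
    have hsum : d₁ + d₂ = c₁ + c₂ := by
      have h : a * (d₁ + d₂) = a * (c₁ + c₂) := by linear_combination hC0 - hCd
      exact mul_left_cancel₀ ha0 h
    have hws : (d₁ - c₁) * (s₁ - s₂) = 0 := by
      linear_combination hC0 - hCd + hI0 - hId - s₂ * hsum
    have h1 : d₁ = c₁ := by
      rcases mul_eq_zero.1 hws with h | h
      · linarith [sub_eq_zero.1 h]
      · exact absurd h hs12
    have h2 : d₂ = c₂ := by linarith [hsum, h1]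
    exact Prod.ext h1 h2
end

section
/- Fix a government-expenditure sequence Gov : ℕ → ℝ. A vector Y⁰ = (T⁰, C⁰, I⁰) ∈ ℝ³ is a consistent initial condition for the singular Samuelson system — that is, there exists a sequence Y : ℕ → ℝ³ with Y_0 = Y⁰ and F·Y_{k+1} = G·Y_k + V_k for all k ∈ ℕ — if and only if T⁰ = C⁰ + I⁰ + Gov_0. -/
theorem samuelson_consistent_iff
    (a b : ℝ) (ha : 0 < a) (ha1 : a < 1) (hb : 0 < b)
    (F G : Matrix (Fin 3) (Fin 3) ℝ)
    (hF : F = !![0, 0, 0; 0, 1, 0; 0, -b, 1])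
    (hG : G = !![-1, 1, 1; a, 0, 0; 0, -b, 0])
    (Gov : ℕ → ℝ)
    (V : ℕ → Fin 3 → ℝ) (hV : ∀ k, V k = ![Gov k, 0, 0])
    (T0 C0 I0 : ℝ) (Y0 : Fin 3 → ℝ) (hY0 : Y0 = ![T0, C0, I0]) :
    (∃ Y : ℕ → Fin 3 → ℝ, Y 0 = Y0 ∧
      ∀ k : ℕ, F.mulVec (Y (k + 1)) = G.mulVec (Y k) + V k) ↔
    T0 = C0 + I0 + Gov 0 := by
  subst hF hG hY0
  constructor
  · rintro ⟨Y, h0, hrec⟩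
    have h := congrFun (hrec 0) 0
    simp [Matrix.mulVec, dotProduct, Fin.sum_univ_three, hV, h0] at h
    linarith
  · intro h
    set Yf : ℕ → Fin 3 → ℝ := fun k => Nat.rec (![T0, C0, I0])
      (fun k Yk => ![a * Yk 0 + b * (a * Yk 0 - Yk 1) + Gov (k+1),
                     a * Yk 0, b * (a * Yk 0 - Yk 1)]) k with hYf
    have hs0 : ∀ k, Yf (k+1) 0 = a * Yf k 0 + b * (a * Yf k 0 - Yf k 1) + Gov (k+1) :=
      fun k => rfl
    have hs1 : ∀ k, Yf (k+1) 1 = a * Yf k 0 := fun k => rfl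
    have hs2 : ∀ k, Yf (k+1) 2 = b * (a * Yf k 0 - Yf k 1) := fun k => rfl
    have hcons : ∀ k, Yf k 0 = Yf k 1 + Yf k 2 + Gov k := by
      intro k
      cases k with
      | zero => simpa [hYf] using h
      | succ m => rw [hs0, hs1, hs2]
    refine ⟨Yf, rfl, fun k => ?_⟩
    funext i
    have h0 := hcons k
    have h1 := hs0 k
    have h2 := hs1 k
    have h3 := hs2 k
    fin_cases i <;>
      simp [Matrix.mulVec, dotProduct, Fin.sum_univ_three, hV] <;>
      first | linarith | (rw [h2, h3]; ring)
end

section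
/- Fix a government-expenditure sequence Gov : ℕ → ℝ and a vector Y⁰ = (T⁰, C⁰, I⁰) ∈ ℝ³ with T⁰ = C⁰ + I⁰ + Gov_0. If Y, Y' : ℕ → ℝ³ both satisfy Y_0 = Y'_0 = Y⁰ and F·Y_{k+1} = G·Y_k + V_k, F·Y'_{k+1} = G·Y'_k + V_k for all k ∈ ℕ, then Y_k = Y'_k for all k ∈ ℕ; that is, the solution of the initial value problem for the singular Samuelson system is unique. -/
theorem samuelson_solution_unique
    (a b : ℝ) (ha : 0 < a) (ha1 : a < 1) (hb : 0 < b)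
    (F G : Matrix (Fin 3) (Fin 3) ℝ)
    (hF : F = !![0, 0, 0; 0, 1, 0; 0, -b, 1])
    (hG : G = !![-1, 1, 1; a, 0, 0; 0, -b, 0])
    (Gov : ℕ → ℝ)
    (V : ℕ → Fin 3 → ℝ) (hV : ∀ k, V k = ![Gov k, 0, 0])
    (T0 C0 I0 : ℝ) (Y0 : Fin 3 → ℝ) (hY0 : Y0 = ![T0, C0, I0])
    (hcons : T0 = C0 + I0 + Gov 0)
    (Y Y' : ℕ → Fin 3 → ℝ)
    (hY0' : Y 0 = Y0) (hY'0 : Y' 0 = Y0)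
    (hsys : ∀ k : ℕ, F.mulVec (Y (k + 1)) = G.mulVec (Y k) + V k)
    (hsys' : ∀ k : ℕ, F.mulVec (Y' (k + 1)) = G.mulVec (Y' k) + V k) :
    ∀ k : ℕ, Y k = Y' k := by
  intro k
  induction k with
  | zero => rw [hY0', hY'0]
  | succ k ih =>
    have e0 := congrFun ih 0
    have e1 := congrFun ih 1
    have e2 := congrFun ih 2
    have h1 := congrFun (hsys k) 1
    have h1' := congrFun (hsys' k) 1
    have h2 := congrFun (hsys k) 2
    have h2' := congrFun (hsys' k) 2
    have h0 := congrFun (hsys (k + 1)) 0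
    have h0' := congrFun (hsys' (k + 1)) 0
    simp only [hF, hG, hV, Matrix.mulVec, dotProduct, Fin.sum_univ_three,
      Pi.add_apply, Matrix.cons_val', Matrix.cons_val_zero, Matrix.cons_val_one,
      Matrix.head_cons, Matrix.empty_val', Matrix.cons_val_fin_one,
      Matrix.cons_val_two, Matrix.tail_cons, Matrix.head_fin_const,
      Matrix.of_apply] at h0 h0' h1 h1' h2 h2'
    have eq1 : Y (k + 1) 1 = Y' (k + 1) 1 := by linear_combination h1 - h1' + a * e0
    have eq2 : Y (k + 1) 2 = Y' (k + 1) 2 := by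
      linear_combination h2 - h2' - b * e1 + b * eq1
    have eq0 : Y (k + 1) 0 = Y' (k + 1) 0 := by linarith
    funext i
    fin_cases i
    · exact eq0
    · exact eq1
    · exact eq2
end

section
/- If Y : ℕ → ℝ³, Y_k = (T_k, C_k, I_k)ᵀ, satisfies F·Y_{k+1} = G·Y_k + V_k for all k ∈ ℕ, then the national income component satisfies the second-order Samuelson difference equation T_{k+2} = a(1+b)·T_{k+1} − a·b·T_k + Gov_{k+2} for all k ∈ ℕ. -/
theorem samuelson_income_second_order
    (a b : ℝ) (ha : 0 < a) (ha1 : a < 1) (hb : 0 < b)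
    (F G : Matrix (Fin 3) (Fin 3) ℝ)
    (hF : F = !![0, 0, 0; 0, 1, 0; 0, -b, 1])
    (hG : G = !![-1, 1, 1; a, 0, 0; 0, -b, 0])
    (Gov : ℕ → ℝ)
    (V : ℕ → Fin 3 → ℝ) (hV : ∀ k, V k = ![Gov k, 0, 0])
    (T C I : ℕ → ℝ)
    (Y : ℕ → Fin 3 → ℝ) (hY : ∀ k, Y k = ![T k, C k, I k])
    (hsys : ∀ k : ℕ, F.mulVec (Y (k + 1)) = G.mulVec (Y k) + V k) :
    ∀ k : ℕ, T (k + 2) = a * (1 + b) * T (k + 1) - a * b * T k + Gov (k + 2) := by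
  have h0 : ∀ k, (0:ℝ) = -T k + C k + I k + Gov k := by
    intro k
    have := congrFun (hsys k) 0
    simp [hF, hG, hV, hY, Matrix.mulVec, dotProduct, Fin.sum_univ_three] at this
    linarith
  have h1 : ∀ k, C (k + 1) = a * T k := by
    intro k
    have := congrFun (hsys k) 1
    simp [hF, hG, hV, hY, Matrix.mulVec, dotProduct, Fin.sum_univ_three] at this
    linarith
  have h2 : ∀ k, -b * C (k + 1) + I (k + 1) = -b * C k := by
    intro k
    have := congrFun (hsys k) 2
    simp [hF, hG, hV, hY, Matrix.mulVec, dotProduct, Fin.sum_univ_three] at this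
    linarith
  intro k
  have e0 := h0 (k + 2)
  have e1 := h1 (k + 1)
  have e1' := h1 k
  have e2 := h2 (k + 1)
  have : k + 1 + 1 = k + 2 := by ring
  rw [this] at e1 e2
  nlinarith [e0, e1, e1', e2]
end

section
/- For any initial national incomes T₀, T₁ ∈ ℝ and any government-expenditure sequence Gov : ℕ → ℝ, the initial vector Y² = (a·T₁ + a·b·(T₁ − T₀) + Gov_2, a·T₁, a·b·(T₁ − T₀))ᵀ is a consistent initial condition at index 2, and there exists exactly one sequence Y : {k ∈ ℕ : k ≥ 2} → ℝ³ with Y_2 = Y² satisfying F·Y_{k+1} = G·Y_k + V_k for all k ≥ 2. In other words, the singular Samuelson model always has a unique solution for initial conditions derived from given initial incomes T₀, T₁. -/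
/-- One step of the Samuelson recursion: given the state `y` at index `k` and the
government expenditure `g` at index `k+1`, produce the state at index `k+1`. -/
def samNext (a b g : ℝ) (y : Fin 3 → ℝ) : Fin 3 → ℝ :=
  ![a * y 0 + b * (a * y 0 - y 1) + g, a * y 0, b * (a * y 0 - y 1)]

/-- The unique solution sequence: `samSeq a b Gov Y2 n` is the state at index `n + 2`. -/
def samSeq (a b : ℝ) (Gov : ℕ → ℝ) (Y2 : Fin 3 → ℝ) : ℕ → Fin 3 → ℝ
  | 0 => Y2
  | n + 1 => samNext a b (Gov (n + 3)) (samSeq a b Gov Y2 n)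

lemma samStep_eq (a b : ℝ) (gk gk1 : ℝ) (y : Fin 3 → ℝ)
    (hy : y 0 = y 1 + y 2 + gk) :
    (!![0, 0, 0; 0, 1, 0; 0, -b, 1] : Matrix (Fin 3) (Fin 3) ℝ).mulVec
        (samNext a b gk1 y) =
      (!![-1, 1, 1; a, 0, 0; 0, -b, 0] : Matrix (Fin 3) (Fin 3) ℝ).mulVec y +
        ![gk, 0, 0] := by
  funext i
  fin_cases i <;>
    simp [samNext, Matrix.mulVec, dotProduct, Fin.sum_univ_three] <;>
    linarith [hy]

lemma samStep_unique (a b : ℝ) (gk gk1 : ℝ) (y z w : Fin 3 → ℝ)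
    (h1 : (!![0, 0, 0; 0, 1, 0; 0, -b, 1] : Matrix (Fin 3) (Fin 3) ℝ).mulVec z =
      (!![-1, 1, 1; a, 0, 0; 0, -b, 0] : Matrix (Fin 3) (Fin 3) ℝ).mulVec y + ![gk, 0, 0])
    (h2 : (!![0, 0, 0; 0, 1, 0; 0, -b, 1] : Matrix (Fin 3) (Fin 3) ℝ).mulVec w =
      (!![-1, 1, 1; a, 0, 0; 0, -b, 0] : Matrix (Fin 3) (Fin 3) ℝ).mulVec z + ![gk1, 0, 0]) :
    z = samNext a b gk1 y := by
  have e1 := congrFun h1 1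
  have e2 := congrFun h1 2
  have e0 := congrFun h2 0
  simp [Matrix.mulVec, dotProduct, Fin.sum_univ_three] at e0 e1 e2
  have hz2 : z 2 = b * (a * y 0 - y 1) := by
    rw [e1] at e2; linear_combination e2
  have hz0 : z 0 = a * y 0 + b * (a * y 0 - y 1) + gk1 := by
    rw [e1, hz2] at e0; linarith
  funext i
  fin_cases i <;> simp [samNext, hz0, e1, hz2]

theorem samuelson_unique_solution_from_initial_incomes
    (a b : ℝ) (ha : 0 < a) (ha1 : a < 1) (hb : 0 < b)
    (F G : Matrix (Fin 3) (Fin 3) ℝ)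
    (hF : F = !![0, 0, 0; 0, 1, 0; 0, -b, 1])
    (hG : G = !![-1, 1, 1; a, 0, 0; 0, -b, 0])
    (Gov : ℕ → ℝ)
    (V : ℕ → Fin 3 → ℝ) (hV : ∀ k, V k = ![Gov k, 0, 0])
    (T₀ T₁ : ℝ) (Y2 : Fin 3 → ℝ)
    (hY2 : Y2 = ![a * T₁ + a * b * (T₁ - T₀) + Gov 2, a * T₁, a * b * (T₁ - T₀)]) :
    ∃! Y : {k : ℕ // 2 ≤ k} → Fin 3 → ℝ,
      Y ⟨2, le_refl 2⟩ = Y2 ∧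
      ∀ (k : ℕ) (hk : 2 ≤ k),
        F.mulVec (Y ⟨k + 1, le_trans hk (Nat.le_succ k)⟩) =
          G.mulVec (Y ⟨k, hk⟩) + V k := by
  subst hF hG
  have hcon : ∀ n : ℕ, (samSeq a b Gov Y2 n) 0 =
      (samSeq a b Gov Y2 n) 1 + (samSeq a b Gov Y2 n) 2 + Gov (n + 2) := by
    intro n
    cases n with
    | zero => simp [samSeq, hY2]
    | succ m => simp [samSeq, samNext]
  refine ⟨fun k => samSeq a b Gov Y2 (k.1 - 2), ⟨rfl, ?_⟩, ?_⟩
  · intro k hk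
    have hk2 : k + 1 - 2 = (k - 2) + 1 := by omega
    have hk3 : k - 2 + 3 = k + 1 := by omega
    have hk4 : k - 2 + 2 = k := by omega
    rw [hV]
    simp only [hk2, samSeq, hk3]
    have hc := hcon (k - 2)
    rw [hk4] at hc
    exact samStep_eq a b (Gov k) (Gov (k + 1)) (samSeq a b Gov Y2 (k - 2)) hc
  · rintro Z ⟨hZ2, hZrec⟩
    funext k
    obtain ⟨k, hk⟩ := k
    induction k, hk using Nat.le_induction with
    | base => exact hZ2
    | succ k hk' ih =>
      have hk2 : k + 1 - 2 = (k - 2) + 1 := by omega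
      have hk3 : k - 2 + 3 = k + 1 := by omega
      have h1 := hZrec k hk'
      have h2 := hZrec (k + 1) (le_trans hk' (Nat.le_succ k))
      rw [hV] at h1 h2
      rw [ih] at h1
      have huniq := samStep_unique a b (Gov k) (Gov (k + 1)) (samSeq a b Gov Y2 (k - 2))
        (Z ⟨k + 1, le_trans hk' (Nat.le_succ k)⟩)
        (Z ⟨k + 1 + 1, le_trans (le_trans hk' (Nat.le_succ k)) (Nat.le_succ (k + 1))⟩) h1 h2
      rw [huniq]
      simp only [hk2, samSeq, hk3]
end
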